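/- arXiv:2503.17516 — 6 statements merged into one kernel-verified Lean document; each statement's English description precedes it below -/
import Mathlib

section
/- For every natural number n ≥ 1, the maximum over θ ∈ [0, 2π) of |sin(θ)·sin(2θ)·sin(4θ)···sin(2ⁿθ)| is at most sin(π/3)ⁿ = (√3/2)ⁿ. -/
open Real Finset

lemma key_sine (x : ℝ) :
    Real.sin x ^ 2 * |Real.sin (2 * x)| ≤ 3 * Real.sqrt 3 / 8 := by
  have h2 : Real.sin x ^ 2 * |Real.sin (2 * x)| = 2 * |Real.sin x| ^ 3 * |Real.cos x| := by
    rw [Real.sin_two_mul, abs_mul, abs_mul, ← sq_abs (Real.sin x)]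
    rw [abs_two]
    ring
  rw [h2]
  set s := |Real.sin x| with hs
  set c := |Real.cos x| with hc
  have hs0 : 0 ≤ s := abs_nonneg _
  have hc0 : 0 ≤ c := abs_nonneg _
  have hsc : s ^ 2 + c ^ 2 = 1 := by
    rw [hs, hc, sq_abs, sq_abs, Real.sin_sq_add_cos_sq]
  have hnn : 0 ≤ 2 * s ^ 3 * c := by positivity
  have hsq : (2 * s ^ 3 * c) ^ 2 ≤ 27 / 64 := by
    nlinarith [mul_nonneg (sq_nonneg (4 * s ^ 2 - 3)) (sq_nonneg (s ^ 2)),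
      mul_nonneg (sq_nonneg (4 * s ^ 2 - 3)) (sq_nonneg s), sq_nonneg (4 * s ^ 2 - 3),
      sq_nonneg s, sq_nonneg c]
  have h3 : (3 * Real.sqrt 3 / 8 : ℝ) ^ 2 = 27 / 64 := by
    have h : Real.sqrt 3 ^ 2 = 3 := Real.sq_sqrt (by norm_num)
    nlinarith [h]
  have hb : (0 : ℝ) ≤ 3 * Real.sqrt 3 / 8 := by positivity
  nlinarith [hsq, h3, hnn, hb, sq_nonneg (2 * s ^ 3 * c - 3 * Real.sqrt 3 / 8)]

theorem sine_product_bound_d2 (n : ℕ) (hn : 1 ≤ n) (θ : ℝ)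
    (hθ : θ ∈ Set.Ico (0 : ℝ) (2 * π)) :
    |∏ j ∈ Finset.range (n + 1), Real.sin ((2 : ℝ) ^ j * θ)| ≤ Real.sin (π / 3) ^ n := by
  set R : ℝ := 3 * Real.sqrt 3 / 8 with hR
  have hR0 : 0 ≤ R := by rw [hR]; positivity
  set Q : ℕ → ℝ := fun m => ∏ j ∈ Finset.range (m + 1), |Real.sin ((2 : ℝ) ^ j * θ)| with hQ
  have hQ0 : ∀ m, 0 ≤ Q m := fun m => Finset.prod_nonneg fun _ _ => abs_nonneg _
  have hkey : ∀ m, Q m ^ 3 ≤ |Real.sin θ| * Real.sin ((2:ℝ) ^ m * θ) ^ 2 * R ^ m := by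
    intro m
    induction m with
    | zero =>
      have : Q 0 = |Real.sin θ| := by simp [hQ]
      rw [this]
      simp only [pow_zero, one_mul, mul_one]
      rw [← sq_abs (Real.sin θ)]
      exact le_of_eq (by ring)
    | succ k ih =>
      set a := |Real.sin ((2:ℝ) ^ (k+1) * θ)| with ha
      set b := Real.sin ((2:ℝ) ^ k * θ) with hb
      have hstep : Q (k + 1) = Q k * a := Finset.prod_range_succ _ _
      have hdouble : ((2:ℝ) ^ (k+1) * θ) = 2 * ((2:ℝ) ^ k * θ) := by ring
      have hk : b ^ 2 * a ≤ R := by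
        rw [ha, hb, hdouble]; exact key_sine _
      have ha0 : (0:ℝ) ≤ a := abs_nonneg _
      have h1 : Q k ^ 3 * a ^ 3 ≤ |Real.sin θ| * b ^ 2 * R ^ k * a ^ 3 :=
        mul_le_mul_of_nonneg_right ih (by positivity)
      have h2 : |Real.sin θ| * b ^ 2 * R ^ k * a ^ 3
          = (|Real.sin θ| * a ^ 2 * R ^ k) * (b ^ 2 * a) := by ring
      have h3 : (|Real.sin θ| * a ^ 2 * R ^ k) * (b ^ 2 * a)
          ≤ (|Real.sin θ| * a ^ 2 * R ^ k) * R :=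
        mul_le_mul_of_nonneg_left hk (by positivity)
      have h4 : a ^ 2 = Real.sin ((2:ℝ) ^ (k+1) * θ) ^ 2 := sq_abs _
      calc Q (k+1) ^ 3 = Q k ^ 3 * a ^ 3 := by rw [hstep]; ring
        _ ≤ (|Real.sin θ| * a ^ 2 * R ^ k) * (b ^ 2 * a) := by rw [← h2]; exact h1
        _ ≤ (|Real.sin θ| * a ^ 2 * R ^ k) * R := h3
        _ = |Real.sin θ| * Real.sin ((2:ℝ) ^ (k+1) * θ) ^ 2 * R ^ (k+1) := by
              rw [← h4]; ring
  have hfinal : Q n ^ 3 ≤ R ^ n := by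
    have h1 := hkey n
    have h2 : |Real.sin θ| * Real.sin ((2:ℝ) ^ n * θ) ^ 2 * R ^ n ≤ 1 * 1 * R ^ n := by
      have hs1 : |Real.sin θ| ≤ 1 := abs_sin_le_one θ
      have hs2 : Real.sin ((2:ℝ) ^ n * θ) ^ 2 ≤ 1 := by
        rw [← sq_abs]
        have := abs_sin_le_one ((2:ℝ) ^ n * θ)
        nlinarith [abs_nonneg (Real.sin ((2:ℝ) ^ n * θ))]
      have hRn : (0:ℝ) ≤ R ^ n := by positivity
      have := mul_le_mul hs1 hs2 (sq_nonneg _) (by norm_num : (0:ℝ) ≤ 1)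
      nlinarith [this, hRn]
    linarith [h1, h2]
  have hsin : Real.sin (π / 3) = Real.sqrt 3 / 2 := Real.sin_pi_div_three
  have hcube : (Real.sin (π / 3) ^ n) ^ 3 = R ^ n := by
    have h : Real.sqrt 3 ^ 2 = 3 := Real.sq_sqrt (by norm_num)
    have e : (Real.sqrt 3 / 2 : ℝ) ^ 3 = 3 * Real.sqrt 3 / 8 := by
      linear_combination (Real.sqrt 3 / 8) * h
    rw [hsin, hR, ← e, ← pow_mul, ← pow_mul, Nat.mul_comm]
  have hP : |∏ j ∈ Finset.range (n + 1), Real.sin ((2 : ℝ) ^ j * θ)| = Q n := by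
    rw [hQ, Finset.abs_prod]
  rw [hP]
  have hs0 : 0 ≤ Real.sin (π / 3) ^ n := by
    rw [hsin]; positivity
  have h3 : Q n ^ 3 ≤ (Real.sin (π / 3) ^ n) ^ 3 := by rw [hcube]; exact hfinal
  exact le_of_pow_le_pow_left₀ (by norm_num) hs0 h3
end

section
/- Let k ≥ 1 and n ≥ 1 be natural numbers. Then for all θ ∈ ℝ, |sin(θ)·sin(2kθ)·sin((2k)²θ)···sin((2k)ⁿθ)| ≤ sin(πk/(2k+1))ⁿ. -/
open Real Finset

/-!
Put `N = 2k + 1` and `f x = sin x ^ (2k) * sin (2k x)`. Its derivative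
`2k sin x ^ (2k - 1) sin (N x)` vanishes only on the grid `(π / N) ℤ`, so on every grid interval
`f` is monotone and `|f|` is bounded by its values at the endpoints. At a grid point `x = iπ/N`
we have `2k x = iπ - x`, hence `|f x| = |sin x| ^ N ≤ sin (kπ/N) ^ N = s ^ N`.
With `u j = |sin ((2k) ^ j θ)|` this reads `u j ^ (2k) * u (j + 1) ≤ s ^ N`, and these `n`
inequalities telescope: `(∏_{j ≤ n} u j) ^ N = u 0 * u n ^ (2k) * ∏_{j < n} u j ^ (2k) * u (j + 1)`.
-/

theorem prod_range_succ_pow_succ {M : Type*} [CommMonoid M] (u : ℕ → M) (m n : ℕ) :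
    (∏ j ∈ range (n + 1), u j) ^ (m + 1) =
      u 0 * u n ^ m * ∏ j ∈ range n, (u j ^ m * u (j + 1)) := by
  induction n with
  | zero => simp [pow_succ']
  | succ n ih =>
    rw [prod_range_succ, mul_pow, ih, prod_range_succ, pow_succ (u (n + 1))]
    ac_rfl

theorem prod_range_succ_le_pow {u : ℕ → ℝ} {c : ℝ} {m : ℕ} (hu₀ : ∀ j, 0 ≤ u j)
    (hu₁ : ∀ j, u j ≤ 1) (hc : 0 ≤ c) (h : ∀ j, u j ^ m * u (j + 1) ≤ c ^ (m + 1)) (n : ℕ) :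
    ∏ j ∈ range (n + 1), u j ≤ c ^ n := by
  refine le_of_pow_le_pow_left₀ m.succ_ne_zero (pow_nonneg hc n) ?_
  rw [prod_range_succ_pow_succ, ← pow_mul, mul_comm n, pow_mul]
  have hfactor_nonneg : ∀ j ∈ range n, 0 ≤ u j ^ m * u (j + 1) :=
    fun j _ => mul_nonneg (pow_nonneg (hu₀ j) m) (hu₀ (j + 1))
  calc u 0 * u n ^ m * ∏ j ∈ range n, (u j ^ m * u (j + 1))
      ≤ 1 * ∏ j ∈ range n, (u j ^ m * u (j + 1)) := by
        gcongr
        · exact prod_nonneg hfactor_nonneg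
        · exact mul_le_one₀ (hu₁ 0) (pow_nonneg (hu₀ n) m) (pow_le_one₀ (hu₀ n) (hu₁ n))
    _ ≤ (c ^ (m + 1)) ^ n := by
        rw [one_mul, pow_eq_prod_const]
        exact prod_le_prod hfactor_nonneg fun j _ => h j

theorem abs_le_max_abs_of_hasDerivAt_ne_zero {f f' : ℝ → ℝ} {a b x : ℝ}
    (hf : ContinuousOn f (Set.Icc a b)) (hf' : ∀ y ∈ Set.Ioo a b, HasDerivAt f (f' y) y)
    (hne : ∀ y ∈ Set.Ioo a b, f' y ≠ 0) (hx : x ∈ Set.Icc a b) : |f x| ≤ max |f a| |f b| := by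
  have hab : a ≤ b := hx.1.trans hx.2
  rw [← interior_Icc] at hf' hne
  have hderiv y (hy : y ∈ interior (Set.Icc a b)) :
      HasDerivWithinAt f (f' y) (interior (Set.Icc a b)) y :=
    (hf' y hy).hasDerivWithinAt
  -- Darboux: a derivative that never vanishes has constant sign.
  rcases hasDerivWithinAt_forall_lt_or_forall_gt_of_forall_ne (convex_Icc a b).interior
    hderiv hne with hneg | hpos
  · have hanti := antitoneOn_of_hasDerivWithinAt_nonpos (convex_Icc a b) hf hderiv
      fun y hy => (hneg y hy).le
    rw [max_comm]
    exact abs_le_max_abs_abs (hanti hx ⟨hab, le_rfl⟩ hx.2) (hanti ⟨le_rfl, hab⟩ hx hx.1)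
  · have hmono := monotoneOn_of_hasDerivWithinAt_nonneg (convex_Icc a b) hf hderiv
      fun y hy => (hpos y hy).le
    exact abs_le_max_abs_abs (hmono ⟨le_rfl, hab⟩ hx hx.1) (hmono hx ⟨hab, le_rfl⟩ hx.2)

theorem sin_ne_zero_of_mem_Ioo {i : ℤ} {y : ℝ} (hy : y ∈ Set.Ioo (i * π) ((i + 1) * π)) :
    sin y ≠ 0 := by
  refine sin_ne_zero_iff.mpr fun n hn => ?_
  subst hn
  have h₁ : i < n := by exact_mod_cast lt_of_mul_lt_mul_right hy.1 pi_pos.le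
  have h₂ : (n : ℝ) < i + 1 := lt_of_mul_lt_mul_right hy.2 pi_pos.le
  have h₂ : n < i + 1 := by exact_mod_cast h₂
  omega

theorem abs_sin_int_mul_pi_div_le (k : ℕ) (i : ℤ) :
    |sin (i * π / (2 * k + 1))| ≤ sin (π * k / (2 * k + 1)) := by
  have hN : (0 : ℝ) < 2 * k + 1 := by positivity
  set r := i % (2 * k + 1)
  set q := i / (2 * k + 1)
  have hr₀ : (0 : ℝ) ≤ r := by exact_mod_cast Int.emod_nonneg _ (by omega)
  have hr₁ : r < 2 * k + 1 := Int.emod_lt_of_pos _ (by omega)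
  have hr₁ : (r : ℝ) ≤ 2 * k := by exact_mod_cast (by omega : r ≤ 2 * k)
  have hi : i * π / (2 * k + 1) = r * π / (2 * k + 1) + q * π := by
    have : (i : ℝ) = r + (2 * k + 1) * q := by exact_mod_cast (Int.emod_add_mul_ediv i _).symm
    rw [this]
    field_simp
  have hrπ : r * π / (2 * k + 1) ≤ π := by
    rw [div_le_iff₀ hN]
    nlinarith [pi_pos]
  rw [hi, sin_add_int_mul_pi, abs_mul, abs_neg_one_zpow, one_mul,
    abs_of_nonneg (sin_nonneg_of_nonneg_of_le_pi (by positivity) hrπ)]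
  have hkπ : π * k / (2 * k + 1) ≤ π / 2 := by
    rw [div_le_div_iff₀ hN two_pos]
    nlinarith [pi_pos]
  have hmono {y : ℝ} (hy₀ : 0 ≤ y) (hy : y ≤ π * k / (2 * k + 1)) :
      sin y ≤ sin (π * k / (2 * k + 1)) :=
    sin_le_sin_of_le_of_le_pi_div_two (by linarith [pi_pos]) hkπ hy
  rcases le_or_gt r k with hrk | hrk
  · refine hmono (by positivity) ?_
    rw [div_le_div_iff_of_pos_right hN, mul_comm]
    gcongr
    exact_mod_cast hrk
  · have hrk : (k : ℝ) + 1 ≤ r := by exact_mod_cast hrk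
    rw [← sin_pi_sub]
    refine hmono (sub_nonneg.mpr hrπ) ?_
    rw [sub_le_iff_le_add, ← add_div, le_div_iff₀ hN]
    nlinarith [pi_pos]

theorem hasDerivAt_sin_pow_mul_sin {k : ℕ} (hk : k ≠ 0) (x : ℝ) :
    HasDerivAt (fun x => sin x ^ (2 * k) * sin (2 * k * x))
      (2 * k * sin x ^ (2 * k - 1) * sin ((2 * k + 1) * x)) x := by
  refine (((hasDerivAt_sin x).pow (2 * k)).mul
    ((hasDerivAt_id x).const_mul (2 * k : ℝ)).sin).congr_deriv ?_
  rw [Pi.pow_apply, ← pow_sub_one_mul (by omega : 2 * k ≠ 0), id, add_mul, one_mul, sin_add]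
  push_cast
  ring

theorem abs_sin_pow_mul_abs_sin_le (k : ℕ) (x : ℝ) :
    |sin x| ^ (2 * k) * |sin (2 * k * x)| ≤ sin (π * k / (2 * k + 1)) ^ (2 * k + 1) := by
  obtain rfl | hk := eq_or_ne k 0
  · simp
  have hN : (0 : ℝ) < 2 * k + 1 := by positivity
  set f : ℝ → ℝ := fun x => sin x ^ (2 * k) * sin (2 * k * x)
  have hgrid (i : ℤ) : |f (i * π / (2 * k + 1))| ≤ sin (π * k / (2 * k + 1)) ^ (2 * k + 1) := by
    have : 2 * k * (i * π / (2 * k + 1)) = i * π - i * π / (2 * k + 1) := by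
      field_simp
      ring
    simp only [f]
    rw [this, sin_int_mul_pi_sub, abs_mul, abs_neg, abs_mul, abs_neg_one_zpow, one_mul, abs_pow,
      ← pow_succ]
    exact pow_le_pow_left₀ (abs_nonneg _) (abs_sin_int_mul_pi_div_le k i) _
  set i := ⌊x * (2 * k + 1) / π⌋
  have hx : x ∈ Set.Icc (i * π / (2 * k + 1)) (((i + 1 : ℤ) : ℝ) * π / (2 * k + 1)) := by
    have h₁ := Int.floor_le (x * (2 * k + 1) / π)
    have h₂ := Int.lt_floor_add_one (x * (2 * k + 1) / π)
    rw [le_div_iff₀ pi_pos] at h₁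
    rw [div_lt_iff₀ pi_pos] at h₂
    push_cast
    constructor
    · rw [div_le_iff₀ hN]; linarith
    · rw [le_div_iff₀ hN]; linarith
  have hne : ∀ y ∈ Set.Ioo (i * π / (2 * k + 1)) (((i + 1 : ℤ) : ℝ) * π / (2 * k + 1)),
      2 * k * sin y ^ (2 * k - 1) * sin ((2 * k + 1) * y) ≠ 0 := by
    intro y ⟨hy₁, hy₂⟩
    push_cast at hy₂
    rw [div_lt_iff₀ hN] at hy₁
    rw [lt_div_iff₀ hN] at hy₂
    have hNy : sin ((2 * k + 1) * y) ≠ 0 :=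
      sin_ne_zero_of_mem_Ioo (i := i) ⟨by linarith, by linarith⟩
    have hy : sin y ≠ 0 := by
      rintro h
      obtain ⟨n, rfl⟩ := sin_eq_zero_iff.mp h
      refine hNy ?_
      rw [← mul_assoc]
      exact_mod_cast sin_int_mul_pi ((2 * k + 1) * n)
    exact mul_ne_zero (mul_ne_zero (by positivity) (pow_ne_zero _ hy)) hNy
  calc |sin x| ^ (2 * k) * |sin (2 * k * x)| = |f x| := by simp only [f, abs_mul, abs_pow]
    _ ≤ max |f (i * π / (2 * k + 1))| |f (((i + 1 : ℤ) : ℝ) * π / (2 * k + 1))| :=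
      abs_le_max_abs_of_hasDerivAt_ne_zero (by fun_prop)
        (fun y _ => hasDerivAt_sin_pow_mul_sin hk y) hne hx
    _ ≤ _ := max_le (hgrid i) (hgrid (i + 1))

theorem sine_product_bound_general_general (k n : ℕ) (θ : ℝ) :
    |∏ j ∈ Finset.range (n + 1), Real.sin ((2 * (k : ℝ)) ^ j * θ)| ≤
      Real.sin (π * k / (2 * k + 1)) ^ n := by
  have hs : 0 ≤ sin (π * k / (2 * k + 1)) := by
    refine sin_nonneg_of_nonneg_of_le_pi (by positivity) ?_
    rw [div_le_iff₀ (by positivity)]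
    nlinarith [pi_pos]
  rw [abs_prod]
  refine prod_range_succ_le_pow (m := 2 * k) (fun _ => abs_nonneg _)
    (fun _ => abs_sin_le_one _) hs (fun j => ?_) n
  rw [pow_succ, mul_comm _ (2 * (k : ℝ)), mul_assoc]
  exact abs_sin_pow_mul_abs_sin_le k _

theorem sine_product_bound_general (k n : ℕ) (hk : 1 ≤ k) (hn : 1 ≤ n) (θ : ℝ) :
    |∏ j ∈ Finset.range (n + 1), Real.sin ((2 * (k : ℝ)) ^ j * θ)| ≤
      Real.sin (π * k / (2 * k + 1)) ^ n :=
  sine_product_bound_general_general k n θ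
end

section
/- For all k ≥ 1 and θ ∈ ℝ, |sin(θ)^{2k} · sin(2kθ)| ≤ sin(πk/(2k+1))^{2k+1}, with equality at θ = πk/(2k+1). -/
open Real

private lemma sin_a_le (k : ℕ) {a : ℝ} (ha0 : 0 ≤ a) (hak : a ≤ k) :
    Real.sin (a * π / (2 * k + 1)) ≤ Real.sin (π * k / (2 * k + 1)) := by
  have hπ := Real.pi_pos
  have hN : (0:ℝ) < 2 * k + 1 := by positivity
  apply Real.sin_le_sin_of_le_of_le_pi_div_two
  · have : (0:ℝ) ≤ a * π / (2 * k + 1) := by positivity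
    linarith [Real.pi_div_two_pos]
  · rw [div_le_div_iff₀ hN two_pos]
    nlinarith [hπ, (Nat.cast_nonneg k : (0:ℝ) ≤ k)]
  · rw [div_le_div_iff₀ hN hN]
    nlinarith [mul_le_mul_of_nonneg_right hak (mul_pos hπ hN).le]

private lemma sin_j_le (k : ℕ) {j : ℤ} (hj0 : 0 < j) (hjN : (j:ℝ) < 2 * k + 1) :
    Real.sin ((j:ℝ) * π / (2 * k + 1)) ≤ Real.sin (π * k / (2 * k + 1)) := by
  have hπ := Real.pi_pos
  have hN : (0:ℝ) < 2 * k + 1 := by positivity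
  have hj0' : (0:ℝ) < (j:ℝ) := by exact_mod_cast hj0
  rcases le_or_gt (j:ℝ) (k:ℝ) with hj | hj
  · exact sin_a_le k (by positivity) hj
  · have h1 : (j:ℝ) * π / (2 * k + 1) = π - (2 * k + 1 - j) * π / (2 * k + 1) := by
      field_simp; ring
    rw [h1, Real.sin_pi_sub]
    apply sin_a_le k
    · nlinarith
    · have hjk : (k:ℤ) + 1 ≤ j := by
        have : (k:ℤ) < j := by exact_mod_cast hj
        omega
      have : ((k:ℝ) + 1) ≤ (j:ℝ) := by exact_mod_cast hjk
      linarith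

private lemma sine_key (k : ℕ) (hk : 1 ≤ k) :
    ∀ θ ∈ Set.Icc (0:ℝ) π,
      (Real.sin θ ^ (2 * k) * Real.sin (2 * k * θ)) ^ 2 ≤
        (Real.sin (π * k / (2 * k + 1)) ^ (2 * k + 1)) ^ 2 := by
  have hπ := Real.pi_pos
  have hk' : (1:ℝ) ≤ (k:ℝ) := by exact_mod_cast hk
  have hN : (0:ℝ) < 2 * k + 1 := by positivity
  set s : ℝ := Real.sin (π * k / (2 * k + 1)) with hs_def
  have hs_pos : 0 < s := by
    apply Real.sin_pos_of_pos_of_lt_pi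
    · positivity
    · rw [div_lt_iff₀ hN]; nlinarith
  set g : ℝ → ℝ := fun θ => Real.sin θ ^ (2 * k) * Real.sin (2 * k * θ) with hg_def
  have hcont : ContinuousOn (fun θ => (g θ) ^ 2) (Set.Icc 0 π) := by
    apply Continuous.continuousOn; rw [hg_def]; fun_prop
  obtain ⟨θ₀, hθ₀mem, hmax⟩ :=
    isCompact_Icc.exists_isMaxOn (Set.nonempty_Icc.2 hπ.le) hcont
  have hbound : (g θ₀) ^ 2 ≤ (s ^ (2 * k + 1)) ^ 2 := by
    rcases le_or_gt ((g θ₀) ^ 2) 0 with h0 | h0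
    · exact h0.trans (by positivity)
    · have hg0 : g θ₀ ≠ 0 := by
        intro hz; rw [hz] at h0; simp at h0
      have hsin0 : Real.sin θ₀ ≠ 0 := by
        intro hz
        apply hg0
        rw [hg_def]; simp only
        rw [hz, zero_pow (by omega), zero_mul]
      have hlt0 : 0 < θ₀ :=
        lt_of_le_of_ne hθ₀mem.1 fun e => hsin0 (by rw [← e, Real.sin_zero])
      have hltπ : θ₀ < π :=
        lt_of_le_of_ne hθ₀mem.2 fun e => hsin0 (by rw [e, Real.sin_pi])
      have hloc : IsLocalMax (fun θ => (g θ) ^ 2) θ₀ :=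
        hmax.isLocalMax (Icc_mem_nhds hlt0 hltπ)
      -- derivative of g
      have hd1 : HasDerivAt (fun θ : ℝ => Real.sin θ ^ (2 * k))
          ((2 * k : ℕ) * Real.sin θ₀ ^ (2 * k - 1) * Real.cos θ₀) θ₀ :=
        (Real.hasDerivAt_sin θ₀).pow (2 * k)
      have hd2 : HasDerivAt (fun θ : ℝ => Real.sin (2 * k * θ))
          (Real.cos (2 * k * θ₀) * (2 * k)) θ₀ := by
        have h' : HasDerivAt (fun θ : ℝ => (2 * (k:ℝ)) * θ) (2 * (k:ℝ)) θ₀ := by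
          simpa using (hasDerivAt_id θ₀).const_mul (2 * (k:ℝ))
        exact (Real.hasDerivAt_sin _).comp θ₀ h'
      have hdg : HasDerivAt g
          (((2 * k : ℕ) * Real.sin θ₀ ^ (2 * k - 1) * Real.cos θ₀) * Real.sin (2 * k * θ₀)
            + Real.sin θ₀ ^ (2 * k) * (Real.cos (2 * k * θ₀) * (2 * k))) θ₀ := hd1.mul hd2
      have hdh := hloc.hasDerivAt_eq_zero (hdg.pow 2)
      have hD0 : ((2 * k : ℕ) * Real.sin θ₀ ^ (2 * k - 1) * Real.cos θ₀) * Real.sin (2 * k * θ₀)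
            + Real.sin θ₀ ^ (2 * k) * (Real.cos (2 * k * θ₀) * (2 * k)) = 0 := by
        rcases mul_eq_zero.1 hdh with h | h
        · exfalso
          rcases mul_eq_zero.1 h with h2 | h2
          · norm_num at h2
          · exact hg0 (pow_eq_zero_iff one_ne_zero |>.1 h2)
        · exact h
      have e2 : Real.sin θ₀ ^ (2 * k) = Real.sin θ₀ ^ (2 * k - 1) * Real.sin θ₀ := by
        conv_lhs => rw [show 2 * k = (2 * k - 1) + 1 by omega]
        rw [pow_succ]
      have hfac : (2 * (k:ℝ)) * Real.sin θ₀ ^ (2 * k - 1) * Real.sin ((2 * k + 1) * θ₀) = 0 := by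
        rw [show ((2:ℝ) * k + 1) * θ₀ = 2 * k * θ₀ + θ₀ by ring, Real.sin_add]
        rw [e2] at hD0
        push_cast at hD0 ⊢
        linear_combination hD0
      have hsinN : Real.sin ((2 * (k:ℝ) + 1) * θ₀) = 0 := by
        rcases mul_eq_zero.1 hfac with h | h
        · exfalso
          rcases mul_eq_zero.1 h with h2 | h2
          · nlinarith
          · exact hsin0 (pow_eq_zero_iff (by omega) |>.1 h2)
        · exact h
      obtain ⟨j, hj⟩ := Real.sin_eq_zero_iff.1 hsinN
      have hj0 : 0 < j := by
        have h1 : (0:ℝ) < (j:ℝ) * π := by rw [hj]; positivity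
        have h2 : (0:ℝ) < (j:ℝ) := by nlinarith
        exact_mod_cast h2
      have hjN : (j:ℝ) < 2 * k + 1 := by
        have h1 : (j:ℝ) * π < (2 * k + 1) * π := by rw [hj]; nlinarith
        nlinarith
      have hθ₀eq : θ₀ = (j:ℝ) * π / (2 * k + 1) := by
        rw [eq_div_iff hN.ne']
        linear_combination -hj
      have hsle : Real.sin θ₀ ≤ s := by
        rw [hθ₀eq, hs_def]; exact sin_j_le k hj0 hjN
      have hspos0 : 0 < Real.sin θ₀ := Real.sin_pos_of_pos_of_lt_pi hlt0 hltπ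
      have e3 : 2 * (k:ℝ) * θ₀ = (j:ℝ) * π - θ₀ := by linear_combination -hj
      have e4 : Real.sin (2 * (k:ℝ) * θ₀) ^ 2 = Real.sin θ₀ ^ 2 := by
        rw [e3, Real.sin_int_mul_pi_sub, neg_sq, mul_pow]
        have habs : ((-1:ℝ) ^ j) ^ 2 = 1 := by
          rcases Int.even_or_odd j with h | h
          · rw [h.neg_one_zpow]; norm_num
          · rw [Odd.neg_one_zpow h]; norm_num
        rw [habs, one_mul]
      calc (g θ₀) ^ 2 = (Real.sin θ₀ ^ (2 * k)) ^ 2 * Real.sin (2 * (k:ℝ) * θ₀) ^ 2 := by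
            rw [hg_def]; ring
        _ = (Real.sin θ₀ ^ (2 * k + 1)) ^ 2 := by rw [e4]; ring
        _ ≤ (s ^ (2 * k + 1)) ^ 2 := by
            have h1 : Real.sin θ₀ ^ (2 * k + 1) ≤ s ^ (2 * k + 1) :=
              pow_le_pow_left₀ hspos0.le hsle (2 * k + 1)
            have h2 : (0:ℝ) ≤ Real.sin θ₀ ^ (2 * k + 1) := by positivity
            exact pow_le_pow_left₀ h2 h1 2
  intro θ hθ
  exact (hmax hθ).trans hbound

theorem sine_step_a (k : ℕ) (hk : 1 ≤ k) :
    (∀ θ : ℝ, |Real.sin θ ^ (2 * k) * Real.sin (2 * k * θ)| ≤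
        Real.sin (π * k / (2 * k + 1)) ^ (2 * k + 1)) ∧
    |Real.sin (π * k / (2 * k + 1)) ^ (2 * k) *
        Real.sin (2 * k * (π * k / (2 * k + 1)))| =
      Real.sin (π * k / (2 * k + 1)) ^ (2 * k + 1) := by
  have hπ := Real.pi_pos
  have hk' : (1:ℝ) ≤ (k:ℝ) := by exact_mod_cast hk
  have hN : (0:ℝ) < 2 * k + 1 := by positivity
  have hs_pos : 0 < Real.sin (π * k / (2 * k + 1)) := by
    apply Real.sin_pos_of_pos_of_lt_pi
    · positivity
    · rw [div_lt_iff₀ hN]; nlinarith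
  constructor
  · intro θ
    set m : ℤ := ⌊θ / π⌋ with hm
    set θ' : ℝ := θ - m * π with hθ'
    have hmem : θ' ∈ Set.Icc (0:ℝ) π := by
      constructor
      · have h1 : (m:ℝ) ≤ θ / π := Int.floor_le _
        have h2 := (le_div_iff₀ hπ).1 h1
        rw [hθ']; linarith
      · have h1 : θ / π < m + 1 := Int.lt_floor_add_one _
        have h2 := (div_lt_iff₀ hπ).1 h1
        rw [hθ']; nlinarith
    have e1 : Real.sin θ ^ (2 * k) = Real.sin θ' ^ (2 * k) := by
      have h3 : θ = θ' + (m:ℝ) * π := by rw [hθ']; ring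
      rw [h3, Real.sin_add_int_mul_pi, mul_pow]
      have habs : ((-1:ℝ) ^ m) ^ (2 * k) = 1 := by
        rcases Int.even_or_odd m with h | h
        · rw [h.neg_one_zpow, one_pow]
        · rw [Odd.neg_one_zpow h]
          exact Even.neg_one_pow ⟨k, by ring⟩
      rw [habs, one_mul]
    have e2 : Real.sin (2 * (k:ℝ) * θ) = Real.sin (2 * (k:ℝ) * θ') := by
      have h2 : 2 * (k:ℝ) * θ = 2 * (k:ℝ) * θ' + ((2 * k * m : ℤ) : ℝ) * π := by
        push_cast; rw [hθ']; ring
      rw [h2, Real.sin_add_int_mul_pi, Even.neg_one_zpow ⟨k * m, by ring⟩, one_mul]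
    rw [e1, e2]
    have h := sine_key k hk θ' hmem
    have h2 : |Real.sin θ' ^ (2 * k) * Real.sin (2 * (k:ℝ) * θ')| ^ 2 ≤
        (Real.sin (π * k / (2 * k + 1)) ^ (2 * k + 1)) ^ 2 := by
      rwa [sq_abs]
    have h3 : (0:ℝ) ≤ Real.sin (π * k / (2 * k + 1)) ^ (2 * k + 1) := by positivity
    exact (pow_le_pow_iff_left₀ (abs_nonneg _) h3 two_ne_zero).1 h2
  · set β : ℝ := π * k / (2 * k + 1) with hβ
    have e3 : 2 * (k:ℝ) * β = (k:ℝ) * π - β := by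
      rw [hβ]; field_simp; ring
    rw [e3, Real.sin_nat_mul_pi_sub, abs_mul, abs_neg, abs_mul, abs_pow, abs_pow,
      abs_neg, abs_one, one_pow, one_mul, abs_of_nonneg hs_pos.le, ← pow_succ]
end

section
/- Let K be a compact metrizable space, φ: K → K a continuous open surjection, w ∈ C(K), and T: C(K) → C(K) the weighted composition operator (Tf)(k) = w(k)·f(φ(k)). Then 0 is in the approximate point spectrum of T if and only if there exists a point k ∈ K such that w vanishes identically on the fiber φ^{-1}({k}). -/
open Filter Topology Function

theorem zero_in_approx_point_spectrum_iff
    {K : Type*} [TopologicalSpace K] [CompactSpace K] [TopologicalSpace.MetrizableSpace K]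
    (φ : K → K) (hφc : Continuous φ) (hφo : IsOpenMap φ) (hφs : Surjective φ)
    (w : C(K, ℂ)) :
    (∃ f : ℕ → C(K, ℂ), (∀ n, ‖f n‖ = 1) ∧
        Tendsto (fun n => ‖w * (f n).comp ⟨φ, hφc⟩‖) atTop (nhds 0)) ↔
      ∃ k : K, ∀ s : K, φ s = k → w s = 0 := by
  constructor
  · rintro ⟨f, hf1, hf0⟩
    by_contra hc
    push_neg at hc
    -- K is nonempty since ‖f 0‖ = 1
    have hK : Nonempty K := by
      by_contra hne
      have : ‖f 0‖ = 0 := by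
        rw [norm_eq_zero]
        ext x
        exact absurd ⟨x⟩ hne
      rw [hf1 0] at this; norm_num at this
    choose s hs hws using hc
    -- open cover
    set U : K → Set K := fun k => φ '' {x | ‖w (s k)‖ / 2 < ‖w x‖} with hU
    have hUopen : ∀ k, IsOpen (U k) := fun k =>
      hφo _ (isOpen_lt continuous_const (continuous_norm.comp w.continuous))
    have hmem : ∀ k, k ∈ U k := fun k =>
      ⟨s k, by simpa using half_lt_self (norm_pos_iff.mpr (hws k)), hs k⟩
    obtain ⟨t, ht⟩ := isCompact_univ.elim_finite_subcover U hUopen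
      (fun k _ => Set.mem_iUnion.mpr ⟨k, hmem k⟩)
    have htne : t.Nonempty := by
      rcases hK with ⟨k0⟩
      rcases Set.mem_iUnion₂.mp (ht (Set.mem_univ k0)) with ⟨k, hk, -⟩
      exact ⟨k, hk⟩
    set δ : ℝ := t.inf' htne (fun k => ‖w (s k)‖ / 2) with hδ
    have hδpos : 0 < δ := by
      rw [hδ, Finset.lt_inf'_iff]
      exact fun k _ => half_pos (norm_pos_iff.mpr (hws k))
    -- lower bound
    have hlow : ∀ n, δ ≤ ‖w * (f n).comp ⟨φ, hφc⟩‖ := by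
      intro n
      obtain ⟨x, -, hx⟩ := isCompact_univ.exists_isMaxOn Set.univ_nonempty
        ((continuous_norm.comp (f n).continuous).continuousOn)
      have hxn : (1 : ℝ) ≤ ‖f n x‖ := by
        rw [← hf1 n]
        exact (ContinuousMap.norm_le _ (norm_nonneg _)).mpr (fun y => hx (Set.mem_univ y))
      rcases Set.mem_iUnion₂.mp (ht (Set.mem_univ x)) with ⟨k, hk, y, hy, hyx⟩
      calc δ ≤ ‖w (s k)‖ / 2 := Finset.inf'_le _ hk
        _ ≤ ‖w y‖ := le_of_lt hy
        _ ≤ ‖w y‖ * ‖f n x‖ := le_mul_of_one_le_right (norm_nonneg _) hxn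
        _ = ‖(w * (f n).comp ⟨φ, hφc⟩) y‖ := by
            simp [ContinuousMap.comp_apply, hyx, norm_mul]
        _ ≤ ‖w * (f n).comp ⟨φ, hφc⟩‖ := (w * (f n).comp ⟨φ, hφc⟩).norm_coe_le_norm y
    have := (hf0.eventually (eventually_lt_nhds hδpos)).exists
    obtain ⟨n, hn⟩ := this
    exact absurd (hlow n) (not_le.mpr hn)
  · rintro ⟨k, hk⟩
    letI : MetricSpace K := TopologicalSpace.metrizableSpaceMetric K
    -- bump functions
    refine ⟨fun n => ⟨fun x => ((max 0 (1 - (n+1) * dist x k) : ℝ) : ℂ), by fun_prop⟩, ?_, ?_⟩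
    · intro n
      have h1 : ‖(⟨fun x => ((max 0 (1 - (n+1) * dist x k) : ℝ) : ℂ), by fun_prop⟩ : C(K,ℂ))‖ ≤ 1 := by
        refine (ContinuousMap.norm_le _ zero_le_one).mpr (fun x => ?_)
        simp only [ContinuousMap.coe_mk, Complex.norm_real, Real.norm_eq_abs]
        rw [abs_of_nonneg (le_max_left _ _)]
        refine max_le zero_le_one ?_
        nlinarith [dist_nonneg (x := x) (y := k), (Nat.cast_nonneg (α := ℝ) n)]
      have h2 : (1:ℝ) ≤ ‖(⟨fun x => ((max 0 (1 - (n+1) * dist x k) : ℝ) : ℂ), by fun_prop⟩ : C(K,ℂ))‖ := by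
        have := (⟨fun x => ((max 0 (1 - (n+1) * dist x k) : ℝ) : ℂ), by fun_prop⟩ : C(K,ℂ)).norm_coe_le_norm k
        simpa using this
      linarith
    · rw [NormedAddCommGroup.tendsto_nhds_zero]
      intro ε hε
      -- find open U ∋ k with φ⁻¹ U ⊆ V := {x | ‖w x‖ < ε/2}
      set V : Set K := {x | ‖w x‖ < ε / 2} with hV
      have hVopen : IsOpen V := isOpen_lt (continuous_norm.comp w.continuous) continuous_const
      have hfibV : φ ⁻¹' {k} ⊆ V := by
        intro x hx
        simp only [Set.mem_preimage, Set.mem_singleton_iff] at hx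
        simp [hV, hk x hx, half_pos hε]
      have hcompl : IsCompact (φ '' Vᶜ) :=
        (hVopen.isClosed_compl.isCompact).image hφc
      have hknot : k ∉ φ '' Vᶜ := by
        rintro ⟨x, hx, rfl⟩
        exact hx (hfibV rfl)
      have hUopen : IsOpen (φ '' Vᶜ)ᶜ := hcompl.isClosed.isOpen_compl
      obtain ⟨r, hr, hball⟩ := Metric.mem_nhds_iff.mp (hUopen.mem_nhds hknot)
      obtain ⟨N, hN⟩ := exists_nat_gt (1 / r)
      refine eventually_atTop.mpr ⟨N, fun n hn => ?_⟩
      have key : ∀ x : K, ‖(w * (ContinuousMap.comp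
          (⟨fun x => ((max 0 (1 - (n+1) * dist x k) : ℝ) : ℂ), by fun_prop⟩ : C(K,ℂ))
          ⟨φ, hφc⟩)) x‖ ≤ ε / 2 := by
        intro x
        by_cases hd : dist (φ x) k < r
        · have hxV : x ∈ V := by
            by_contra hxV
            exact (hball hd) ⟨x, hxV, rfl⟩
          have hb : ‖((max 0 (1 - (n+1) * dist (φ x) k) : ℝ) : ℂ)‖ ≤ 1 := by
            simp only [Complex.norm_real, Real.norm_eq_abs]
            rw [abs_of_nonneg (le_max_left _ _)]
            refine max_le zero_le_one ?_
            nlinarith [dist_nonneg (x := φ x) (y := k), (Nat.cast_nonneg (α := ℝ) n)]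
          calc ‖w x * ((max 0 (1 - (n+1) * dist (φ x) k) : ℝ) : ℂ)‖
              = ‖w x‖ * ‖((max 0 (1 - (n+1) * dist (φ x) k) : ℝ) : ℂ)‖ := norm_mul _ _
            _ ≤ ‖w x‖ * 1 := mul_le_mul_of_nonneg_left hb (norm_nonneg _)
            _ ≤ ε / 2 := by rw [mul_one]; exact le_of_lt hxV
        · push_neg at hd
          have hrN : 1 / r < (N : ℝ) := hN
          have hrpos : (0:ℝ) < r := hr
          have : 1 - (n+1) * dist (φ x) k ≤ 0 := by
            have h1 : (N : ℝ) ≤ (n : ℝ) + 1 := by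
              have : (N : ℝ) ≤ n := Nat.cast_le.mpr hn
              linarith
            have h2 : 1 / r ≤ (n : ℝ) + 1 := le_trans (le_of_lt hrN) h1
            have h3 : (1:ℝ) ≤ ((n:ℝ)+1) * r := by
              rw [div_le_iff₀ hrpos] at h2; linarith
            nlinarith [dist_nonneg (x := φ x) (y := k), (Nat.cast_nonneg (α := ℝ) n)]
          have : max 0 (1 - (n+1) * dist (φ x) k) = 0 := max_eq_left this
          simp [ContinuousMap.comp_apply, this]
          positivity
      have hle : ‖w * (ContinuousMap.comp
          (⟨fun x => ((max 0 (1 - (n+1) * dist x k) : ℝ) : ℂ), by fun_prop⟩ : C(K,ℂ))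
          ⟨φ, hφc⟩)‖ ≤ ε / 2 :=
        (ContinuousMap.norm_le _ (half_pos hε).le).mpr key
      calc ‖‖w * (ContinuousMap.comp
          (⟨fun x => ((max 0 (1 - (n+1) * dist x k) : ℝ) : ℂ), by fun_prop⟩ : C(K,ℂ))
          ⟨φ, hφc⟩)‖‖ = ‖w * (ContinuousMap.comp
          (⟨fun x => ((max 0 (1 - (n+1) * dist x k) : ℝ) : ℂ), by fun_prop⟩ : C(K,ℂ))
          ⟨φ, hφc⟩)‖ := norm_norm _
        _ ≤ ε / 2 := hle
        _ < ε := half_lt_self hε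
end

section
/- Let K be a compact metrizable space, φ: K → K a continuous open surjection, w ∈ C(K), and (Tf)(k) = w(k)·f(φ(k)) on C(K). Suppose there exist fₙ ∈ C(K) with ‖fₙ‖ = 1 and ‖Tfₙ − fₙ‖ → 0, and let kₙ ∈ K satisfy |fₙ(kₙ)| = 1 with kₙ → k. Then for any e ∈ K and m, n ≥ 0 with φ^m(e) = φ^n(k), one has |w_m(e)| ≤ |w_n(k)|, where w₀ ≡ 1 and w_j(x) = w(x)·w(φ(x))···w(φ^{j−1}(x)). -/
/-!
Iterating the approximate eigen-equation `w · (fₙ ∘ φ) ≈ fₙ` gives `w_j · (fₙ ∘ φ^j) ≈ fₙ` with an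
error `O(‖T fₙ - fₙ‖)` for each fixed `j`. At the common point `z = φ^m(x) = φ^n(kₙ)` this yields
`|w_m(x)| |fₙ(z)| ≲ 1` and `1 ≲ |w_n(kₙ)| |fₙ(z)|`, hence `|w_m(x)| ≲ |w_n(kₙ)|`. Openness of `φ^m`
lets `x` run through lifts of `φ^n(kₙ)` converging to `e`, and continuity passes to the limit.
-/

open Filter Topology Function

lemma IsOpenMap.iterate {X : Type*} [TopologicalSpace X] {φ : X → X} (hφ : IsOpenMap φ) :
    ∀ j : ℕ, IsOpenMap φ^[j]
  | 0 => IsOpenMap.id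
  | j + 1 => (hφ.iterate j).comp hφ

section Cocycle

variable {X 𝕜 : Type*} [NormedField 𝕜] (φ : X → X) (w : X → 𝕜)

/-- The `j`-th power of `f ↦ w · (f ∘ φ)` is `f ↦ cocycle φ w j · (f ∘ φ^j)`. -/
def cocycle (j : ℕ) (x : X) : 𝕜 :=
  ∏ i ∈ Finset.range j, w (φ^[i] x)

lemma cocycle_succ (j : ℕ) (x : X) :
    cocycle φ w (j + 1) x = cocycle φ w j x * w (φ^[j] x) :=
  Finset.prod_range_succ _ _

variable {φ w}

lemma norm_cocycle_le {W : ℝ} (hw : ∀ x, ‖w x‖ ≤ W) (j : ℕ) (x : X) :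
    ‖cocycle φ w j x‖ ≤ W ^ j := by
  rw [cocycle, norm_prod]
  exact (Finset.prod_le_prod (fun _ _ => norm_nonneg _) fun i _ => hw _).trans_eq (by simp)

lemma norm_cocycle_mul_iterate_sub_le {g : X → 𝕜} {W ε : ℝ} (hw : ∀ x, ‖w x‖ ≤ W)
    (hg : ∀ x, ‖w x * g (φ x) - g x‖ ≤ ε) (j : ℕ) (x : X) :
    ‖cocycle φ w j x * g (φ^[j] x) - g x‖ ≤ (∑ i ∈ Finset.range j, W ^ i) * ε := by
  induction j with
  | zero => simp [cocycle]
  | succ j ih =>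
    have hW : 0 ≤ W := (norm_nonneg _).trans (hw x)
    have hstep :
        ‖cocycle φ w j x * (w (φ^[j] x) * g (φ (φ^[j] x)) - g (φ^[j] x))‖ ≤ W ^ j * ε := by
      rw [norm_mul]
      exact mul_le_mul (norm_cocycle_le hw j x) (hg _) (norm_nonneg _) (pow_nonneg hW j)
    calc ‖cocycle φ w (j + 1) x * g (φ^[j + 1] x) - g x‖
        = ‖cocycle φ w j x * (w (φ^[j] x) * g (φ (φ^[j] x)) - g (φ^[j] x))
            + (cocycle φ w j x * g (φ^[j] x) - g x)‖ := by
          rw [cocycle_succ, iterate_succ_apply']; congr 1; ring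
      _ ≤ W ^ j * ε + (∑ i ∈ Finset.range j, W ^ i) * ε :=
          (norm_add_le _ _).trans (add_le_add hstep ih)
      _ = (∑ i ∈ Finset.range (j + 1), W ^ i) * ε := by rw [Finset.sum_range_succ]; ring

lemma norm_cocycle_mul_le_of_iterate_eq {g : X → 𝕜} {W ε : ℝ} (hw : ∀ x, ‖w x‖ ≤ W)
    (hg : ∀ x, ‖w x * g (φ x) - g x‖ ≤ ε) (hg1 : ∀ x, ‖g x‖ ≤ 1) {m n : ℕ} {x y : X}
    (hxy : φ^[m] x = φ^[n] y) (hy : ‖g y‖ = 1) :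
    ‖cocycle φ w m x‖ * (1 - (∑ i ∈ Finset.range n, W ^ i) * ε) ≤
      (1 + (∑ i ∈ Finset.range m, W ^ i) * ε) * ‖cocycle φ w n y‖ := by
  have hx := (abs_norm_sub_norm_le _ _).trans (norm_cocycle_mul_iterate_sub_le hw hg m x)
  have hy' := (abs_norm_sub_norm_le _ _).trans (norm_cocycle_mul_iterate_sub_le hw hg n y)
  rw [norm_mul, hxy, abs_le] at hx
  rw [norm_mul, hy, abs_le] at hy'
  have hupper : ‖cocycle φ w m x‖ * ‖g (φ^[n] y)‖ ≤ 1 + (∑ i ∈ Finset.range m, W ^ i) * ε := by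
    linarith [hg1 x]
  calc ‖cocycle φ w m x‖ * (1 - (∑ i ∈ Finset.range n, W ^ i) * ε)
      ≤ ‖cocycle φ w m x‖ * (‖cocycle φ w n y‖ * ‖g (φ^[n] y)‖) :=
        mul_le_mul_of_nonneg_left (by linarith) (norm_nonneg _)
    _ = ‖cocycle φ w m x‖ * ‖g (φ^[n] y)‖ * ‖cocycle φ w n y‖ := by ring
    _ ≤ _ := mul_le_mul_of_nonneg_right hupper (norm_nonneg _)

lemma continuous_cocycle [TopologicalSpace X] (hφ : Continuous φ) (hw : Continuous w) (j : ℕ) :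
    Continuous (cocycle φ w j) :=
  continuous_finsetProd _ fun i _ => hw.comp (hφ.iterate i)

end Cocycle

theorem cocycle_domination_of_approx_eigenvectors_general
    {K : Type*} [TopologicalSpace K] [CompactSpace K] [TopologicalSpace.MetrizableSpace K]
    (φ : K → K) (hφc : Continuous φ) (hφo : IsOpenMap φ)
    (w : C(K, ℂ))
    (f : ℕ → C(K, ℂ)) (hf : ∀ n, ‖f n‖ = 1)
    (happrox : Tendsto (fun n => ‖w * (f n).comp ⟨φ, hφc⟩ - f n‖) atTop (nhds 0))
    (kseq : ℕ → K) (hk1 : ∀ n, ‖(f n) (kseq n)‖ = 1)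
    (k : K) (hklim : Tendsto kseq atTop (nhds k))
    (e : K) (m n : ℕ) (h : φ^[m] e = φ^[n] k) :
    ‖∏ i ∈ Finset.range m, w (φ^[i] e)‖ ≤
      ‖∏ i ∈ Finset.range n, w (φ^[i] k)‖ := by
  show ‖cocycle φ w m e‖ ≤ ‖cocycle φ w n k‖
  set ε : ℕ → ℝ := fun q => ‖w * (f q).comp ⟨φ, hφc⟩ - f q‖
  set Cm := ∑ i ∈ Finset.range m, ‖w‖ ^ i
  set Cn := ∑ i ∈ Finset.range n, ‖w‖ ^ i
  -- Openness of `φ^m` makes its fibres lower hemicontinuous, so `e` lifts `φ^n (kseq q) → φ^n k`.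
  obtain ⟨eseq, hlift, helim⟩ : ∃ eseq : ℕ → K,
      (∀ᶠ q in atTop, φ^[m] (eseq q) = φ^[n] (kseq q)) ∧ Tendsto eseq atTop (𝓝 e) :=
    LowerHemicontinuousAt.exists_seq_tendsto
      (isOpenMap_iff_lowerHemicontinuous.mp (hφo.iterate m) _)
      (((hφc.iterate n).tendsto k).comp hklim) h
  have hineq : ∀ᶠ q in atTop, ‖cocycle φ w m (eseq q)‖ * (1 - Cn * ε q) ≤
      (1 + Cm * ε q) * ‖cocycle φ w n (kseq q)‖ :=
    hlift.mono fun q hq => norm_cocycle_mul_le_of_iterate_eq w.norm_coe_le_norm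
      (fun x => ((w * (f q).comp ⟨φ, hφc⟩ - f q).norm_coe_le_norm x))
      (fun x => hf q ▸ (f q).norm_coe_le_norm x) hq (hk1 q)
  have hε : Tendsto ε atTop (𝓝 0) := happrox
  have hcont (j : ℕ) : Continuous fun x => ‖cocycle φ w j x‖ :=
    (continuous_cocycle hφc w.continuous j).norm
  refine le_of_tendsto_of_tendsto ?_ ?_ hineq
  · simpa using (((hcont m).tendsto e).comp helim).mul
      ((tendsto_const_nhds (x := 1)).sub (tendsto_const_nhds.mul hε))
  · simpa using ((tendsto_const_nhds (x := 1)).add (tendsto_const_nhds.mul hε)).mul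
      (((hcont n).tendsto k).comp hklim)

theorem cocycle_domination_of_approx_eigenvectors
    {K : Type*} [TopologicalSpace K] [CompactSpace K] [TopologicalSpace.MetrizableSpace K]
    (φ : K → K) (hφc : Continuous φ) (hφo : IsOpenMap φ) (hφs : Surjective φ)
    (w : C(K, ℂ))
    (f : ℕ → C(K, ℂ)) (hf : ∀ n, ‖f n‖ = 1)
    (happrox : Tendsto (fun n => ‖w * (f n).comp ⟨φ, hφc⟩ - f n‖) atTop (nhds 0))
    (kseq : ℕ → K) (hk1 : ∀ n, ‖(f n) (kseq n)‖ = 1)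
    (k : K) (hklim : Tendsto kseq atTop (nhds k))
    (e : K) (m n : ℕ) (h : φ^[m] e = φ^[n] k) :
    ‖∏ i ∈ Finset.range m, w (φ^[i] e)‖ ≤
      ‖∏ i ∈ Finset.range n, w (φ^[i] k)‖ :=
  cocycle_domination_of_approx_eigenvectors_general φ hφc hφo w f hf happrox kseq hk1 k hklim e m n
    h
end

section
/- There exists a compact metrizable space K, a continuous (but not open) surjection φ: K → K, and w ∈ C(K) such that 1 lies in the approximate point spectrum of the operator (Tf)(k) = w(k)f(φ(k)) on C(K), yet no point k ∈ K satisfies both |wₙ(k)| ≥ 1 for all n and the condition that |wₙ(t)| ≤ 1 for all t ∈ φ^{-n}({k}) and all n. Concretely one may take K = {0} ∪ {1/n : n ∈ ℕ} ∪ [1,2], φ(0) = 0, φ(1/n) = 1/(n−1) for n ≥ 2, φ(1) fixing [1,2] pointwise, with w(x) = x on [1,2] and w ≡ 2 elsewhere. -/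
/-!
On `[1, 2]` the map `φ` is the identity and `w x = x`, so `T f - f = (x - 1) f` there; tents of
height `1` shrinking to the fixed point `1` are therefore approximate eigenvectors for `1`.
On the other hand every point `k` has a preimage `t` with `|w t| > 1`: the points `0` and `1/n` are
images of points where `w = 2`, and `1 < k ≤ 2` is fixed with `w k = k`. So the second cocycle
condition already fails for `n = 1`. Finally `φ` maps the open set `{x < 1}` into `{y ≤ 1}` and
`1/2` to `1`, which is a limit of points of `(1, 2]`; so `φ` is not open.
-/

open Function

/-- The compact set `{0} ∪ {1/n : n ≥ 1} ∪ [1,2]` of Example 2.7. -/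
def S10 : Set ℝ := {0} ∪ {x : ℝ | ∃ n : ℕ, 1 ≤ n ∧ x = 1 / n} ∪ Set.Icc 1 2

open Filter Topology

noncomputable section

def tent (c r x : ℝ) : ℝ := max 0 (1 - |x - c| / r)

lemma tent_nonneg (c r x : ℝ) : 0 ≤ tent c r x := le_max_left _ _

lemma tent_le_one {r : ℝ} (hr : 0 ≤ r) (c x : ℝ) : tent c r x ≤ 1 :=
  max_le zero_le_one (by linarith [div_nonneg (abs_nonneg (x - c)) hr])

lemma tent_self (c r : ℝ) : tent c r c = 1 := by simp [tent]

lemma continuous_tent (c r : ℝ) : Continuous (tent c r) := by unfold tent; fun_prop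

lemma abs_sub_lt_of_tent_ne_zero {c r x : ℝ} (hr : 0 < r) (h : tent c r x ≠ 0) : |x - c| < r := by
  by_contra! hle
  exact h (max_eq_left (by rw [sub_nonpos, le_div_iff₀ hr]; linarith))

lemma tent_eq_zero_of_le {c r x : ℝ} (hr : 0 < r) (hx : x ≤ c - r) : tent c r x = 0 := by
  by_contra h
  linarith [(abs_lt.1 (abs_sub_lt_of_tent_ne_zero hr h)).1]

lemma abs_sub_mul_tent_le {a r : ℝ} (hr : 0 < r) (x : ℝ) :
    |(x - a) * tent (a + r) r x| ≤ 2 * r := by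
  by_cases h : tent (a + r) r x = 0
  · rw [h, mul_zero, abs_zero]; positivity
  obtain ⟨h₁, h₂⟩ := abs_lt.1 (abs_sub_lt_of_tent_ne_zero hr h)
  rw [abs_mul, abs_of_pos (by linarith : 0 < x - a), abs_of_nonneg (tent_nonneg _ _ _)]
  nlinarith [tent_le_one hr.le (a + r) x]

namespace S10

lemma zero_mem : (0 : ℝ) ∈ S10 := Or.inl (Or.inl rfl)

lemma one_div_mem {n : ℕ} (hn : 1 ≤ n) : 1 / (n : ℝ) ∈ S10 := Or.inl (Or.inr ⟨n, hn, rfl⟩)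

lemma Icc_subset : Set.Icc 1 2 ⊆ S10 := fun _ => Or.inr

lemma one_mem : (1 : ℝ) ∈ S10 := Icc_subset ⟨le_rfl, one_le_two⟩

lemma one_add_one_div_succ_mem (n : ℕ) : 1 + 1 / ((n : ℝ) + 1) ∈ S10 := by
  have hle : 1 / ((n : ℝ) + 1) ≤ 1 := by simpa using Nat.one_div_le_one_div (α := ℝ) n.zero_le
  exact Icc_subset ⟨le_add_of_nonneg_right Nat.one_div_pos_of_nat.le, by linarith⟩

lemma le_half_or_mem_Icc {x : ℝ} (hx : x ∈ S10) : x ≤ 1 / 2 ∨ x ∈ Set.Icc (1 : ℝ) 2 := by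
  rcases hx with (rfl | ⟨n, hn, rfl⟩) | h
  · norm_num
  · rcases hn.eq_or_lt with rfl | hn
    · right; norm_num
    · have h2 : (2 : ℝ) ≤ n := by exact_mod_cast hn
      exact Or.inl (one_div_le_one_div_of_le two_pos h2)
  · exact Or.inr h

lemma setOf_one_div_eq_range :
    {x : ℝ | ∃ n : ℕ, 1 ≤ n ∧ x = 1 / n} = Set.range fun n : ℕ => 1 / ((n : ℝ) + 1) := by
  ext x
  constructor
  · rintro ⟨n, hn, rfl⟩
    exact ⟨n - 1, show 1 / (((n - 1 : ℕ) : ℝ) + 1) = 1 / n by rw [Nat.cast_pred hn, sub_add_cancel]⟩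
  · rintro ⟨n, rfl⟩
    exact ⟨n + 1, by omega, by push_cast; rfl⟩

theorem isCompact : IsCompact S10 := by
  rw [S10, setOf_one_div_eq_range, Set.singleton_union]
  exact tendsto_one_div_add_atTop_nhds_zero_nat.isCompact_insert_range.union isCompact_Icc

/-- Continuous on all of `ℝ`; equal to `x / (1 - x)` on `[0, 1/2]` and to `x` on `[1, ∞)`. -/
def shiftReal (x : ℝ) : ℝ := x / max (1 - x) (min x 1)

lemma max_one_sub_min_one_pos (x : ℝ) : 0 < max (1 - x) (min x 1) := by
  rcases lt_or_ge x 1 with h | h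
  · exact lt_max_of_lt_left (by linarith)
  · exact lt_max_of_lt_right (by rw [min_eq_right h]; exact one_pos)

lemma continuous_shiftReal : Continuous shiftReal :=
  continuous_id.div (by fun_prop) fun x => (max_one_sub_min_one_pos x).ne'

lemma shiftReal_of_le_half {x : ℝ} (h : x ≤ 1 / 2) : shiftReal x = x / (1 - x) := by
  rw [shiftReal, max_eq_left (min_le_of_left_le (by linarith))]

lemma shiftReal_of_one_le {x : ℝ} (h : 1 ≤ x) : shiftReal x = x := by
  rw [shiftReal, min_eq_right h, max_eq_right (by linarith), div_one]

lemma shiftReal_zero : shiftReal 0 = 0 := by simp [shiftReal]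

lemma shiftReal_one_div {n : ℝ} (hn : 2 ≤ n) : shiftReal (1 / n) = 1 / (n - 1) := by
  rw [shiftReal_of_le_half (one_div_le_one_div_of_le two_pos hn)]
  field_simp

lemma shiftReal_le_one_of_le_half {x : ℝ} (h : x ≤ 1 / 2) : shiftReal x ≤ 1 := by
  rw [shiftReal_of_le_half h, div_le_one (by linarith)]
  linarith

lemma shiftReal_mem {x : ℝ} (hx : x ∈ S10) : shiftReal x ∈ S10 := by
  rcases hx with (rfl | ⟨n, hn, rfl⟩) | h
  · rw [shiftReal_zero]; exact zero_mem
  · rcases hn.eq_or_lt with rfl | hn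
    · rw [Nat.cast_one, div_one, shiftReal_of_one_le le_rfl]; exact Icc_subset (by norm_num)
    · rw [shiftReal_one_div (by exact_mod_cast hn), ← Nat.cast_pred (by omega)]
      exact one_div_mem (by omega)
  · rw [shiftReal_of_one_le h.1]; exact Icc_subset h

def shift (x : S10) : S10 := ⟨shiftReal x, shiftReal_mem x.2⟩

lemma coe_shift (x : S10) : (shift x : ℝ) = shiftReal x := rfl

lemma continuous_shift : Continuous shift :=
  (continuous_shiftReal.comp continuous_subtype_val).subtype_mk _

/-- Continuous on all of `ℝ`; equal to `2` on `(-∞, 1/2]` and to `x` on `[1, ∞)`. -/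
def weightReal (x : ℝ) : ℝ := max x (min 2 (4 - 4 * x))

lemma weightReal_of_le_half {x : ℝ} (h : x ≤ 1 / 2) : weightReal x = 2 := by
  rw [weightReal, min_eq_left (by linarith), max_eq_right (by linarith)]

lemma weightReal_of_one_le {x : ℝ} (h : 1 ≤ x) : weightReal x = x :=
  max_eq_left (min_le_of_right_le (by linarith))

def weight (x : S10) : ℂ := weightReal x

lemma continuous_weight : Continuous weight := by unfold weight weightReal; fun_prop

lemma exists_shiftReal_eq_one_lt_weightReal {k : ℝ} (hk : k ∈ S10) :
    ∃ t ∈ S10, shiftReal t = k ∧ 1 < weightReal t := by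
  have of_one_div : ∀ n : ℕ, 1 ≤ n → ∃ t ∈ S10, shiftReal t = 1 / n ∧ 1 < weightReal t := by
    intro n hn
    have hn' : (1 : ℝ) ≤ n := by exact_mod_cast hn
    refine ⟨1 / ((n + 1 : ℕ) : ℝ), one_div_mem (by omega), ?_, ?_⟩
    · rw [Nat.cast_succ, shiftReal_one_div (by linarith), add_sub_cancel_right]
    · rw [weightReal_of_le_half (one_div_le_one_div_of_le two_pos (by push_cast; linarith))]
      exact one_lt_two
  rcases hk with (rfl | ⟨n, hn, rfl⟩) | h
  · refine ⟨0, zero_mem, shiftReal_zero, ?_⟩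
    rw [weightReal_of_le_half (by norm_num)]
    exact one_lt_two
  · exact of_one_div n hn
  · rcases h.1.eq_or_lt with rfl | h₁
    · simpa using of_one_div 1 le_rfl
    · exact ⟨k, Icc_subset h, shiftReal_of_one_le h.1, by rwa [weightReal_of_one_le h.1]⟩

lemma exists_shift_eq_one_lt_weightReal (k : S10) : ∃ t : S10, shift t = k ∧ 1 < weightReal t := by
  obtain ⟨t, ht, hkt, hw⟩ := exists_shiftReal_eq_one_lt_weightReal k.2
  exact ⟨⟨t, ht⟩, Subtype.ext hkt, hw⟩

lemma surjective_shift : Surjective shift := fun k =>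
  (exists_shift_eq_one_lt_weightReal k).imp fun _ ht => ht.1

lemma frequently_one_lt_nhds_one :
    ∃ᶠ y : S10 in 𝓝 ⟨1, one_mem⟩, 1 < (y : ℝ) := by
  have hlim : Tendsto (fun n : ℕ => (⟨_, one_add_one_div_succ_mem n⟩ : S10)) atTop
      (𝓝 ⟨1, one_mem⟩) := by
    rw [tendsto_subtype_rng]
    simpa using tendsto_one_div_add_atTop_nhds_zero_nat.const_add (1 : ℝ)
  exact hlim.frequently (Frequently.of_forall fun n =>
    show (1 : ℝ) < 1 + 1 / ((n : ℝ) + 1) from lt_add_of_pos_right 1 Nat.one_div_pos_of_nat)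

lemma not_isOpenMap_shift : ¬ IsOpenMap shift := by
  intro h
  have half_mem : (1 / 2 : ℝ) ∈ S10 := by simpa using one_div_mem (n := 2) (by norm_num)
  have hU : {x : S10 | (x : ℝ) < 1} ∈ 𝓝 (⟨1 / 2, half_mem⟩ : S10) :=
    (isOpen_lt continuous_subtype_val continuous_const).mem_nhds (by norm_num)
  have hshift : shift ⟨1 / 2, half_mem⟩ = ⟨1, one_mem⟩ :=
    Subtype.ext ((shiftReal_one_div le_rfl).trans (by norm_num))
  have hle : ∀ᶠ y : S10 in 𝓝 ⟨1, one_mem⟩, (y : ℝ) ≤ 1 := by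
    have himage := h.image_mem_nhds hU
    rw [hshift] at himage
    refine mem_of_superset himage ?_
    rintro _ ⟨x, hx, rfl⟩
    rcases le_half_or_mem_Icc x.2 with h₁ | h₁
    · exact shiftReal_le_one_of_le_half h₁
    · exact absurd h₁.1 (not_le.2 hx)
  obtain ⟨y, hy₁, hy₂⟩ := (frequently_one_lt_nhds_one.and_eventually hle).exists
  exact hy₁.not_ge hy₂

lemma abs_weightReal_mul_tent_shiftReal_sub_le {r x : ℝ} (hr : 0 < r) (hx : x ∈ S10) :
    |weightReal x * tent (1 + r) r (shiftReal x) - tent (1 + r) r x| ≤ 2 * r := by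
  rcases le_half_or_mem_Icc hx with h₁ | h₁
  · rw [tent_eq_zero_of_le hr (by linarith [shiftReal_le_one_of_le_half h₁]),
      tent_eq_zero_of_le hr (by linarith)]
    simpa using hr.le
  · rw [shiftReal_of_one_le h₁.1, weightReal_of_one_le h₁.1, ← sub_one_mul]
    exact abs_sub_mul_tent_le hr x

def approxEigenvector (n : ℕ) (x : S10) : ℂ :=
  tent (1 + 1 / ((n : ℝ) + 1)) (1 / ((n : ℝ) + 1)) x

lemma continuous_approxEigenvector (n : ℕ) : Continuous (approxEigenvector n) :=
  Complex.continuous_ofReal.comp ((continuous_tent _ _).comp continuous_subtype_val)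

lemma norm_approxEigenvector_le (n : ℕ) (x : S10) : ‖approxEigenvector n x‖ ≤ 1 := by
  rw [approxEigenvector, Complex.norm_real, Real.norm_of_nonneg (tent_nonneg _ _ _)]
  exact tent_le_one (by positivity) _ _

lemma exists_norm_approxEigenvector_eq_one (n : ℕ) : ∃ x, ‖approxEigenvector n x‖ = 1 := by
  refine ⟨⟨_, one_add_one_div_succ_mem n⟩, ?_⟩
  rw [approxEigenvector, tent_self, Complex.ofReal_one, norm_one]

lemma norm_weight_mul_approxEigenvector_shift_sub_le (n : ℕ) (x : S10) :
    ‖weight x * approxEigenvector n (shift x) - approxEigenvector n x‖ ≤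
      2 * (1 / ((n : ℝ) + 1)) := by
  have := abs_weightReal_mul_tent_shiftReal_sub_le (r := 1 / ((n : ℝ) + 1)) (by positivity) x.2
  rwa [weight, approxEigenvector, approxEigenvector, ← Complex.ofReal_mul, ← Complex.ofReal_sub,
    Complex.norm_real]

end S10

end

theorem openness_cannot_be_dropped :
    IsCompact S10 ∧
    ∃ (φ : S10 → S10) (w : S10 → ℂ),
      Continuous φ ∧ Surjective φ ∧ ¬ IsOpenMap φ ∧ Continuous w ∧
      (∀ x : S10, (x : ℝ) = 0 → (φ x : ℝ) = 0) ∧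
      (∀ x : S10, ∀ n : ℕ, 2 ≤ n → (x : ℝ) = 1 / n → (φ x : ℝ) = 1 / ((n : ℝ) - 1)) ∧
      (∀ x : S10, (x : ℝ) ∈ Set.Icc (1 : ℝ) 2 → φ x = x) ∧
      (∀ x : S10, (x : ℝ) ∈ Set.Icc (1 : ℝ) 2 → w x = ((x : ℝ) : ℂ)) ∧
      (∀ x : S10, (x : ℝ) ∉ Set.Icc (1 : ℝ) 2 → w x = 2) ∧
      -- `1` lies in the approximate point spectrum of `T f = w · (f ∘ φ)`
      (∃ f : ℕ → S10 → ℂ,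
        (∀ n, Continuous (f n) ∧ (∀ x, ‖f n x‖ ≤ 1) ∧
          ∃ x, ‖f n x‖ = 1) ∧
        (∀ ε : ℝ, 0 < ε → ∃ N : ℕ, ∀ n, N ≤ n →
          ∀ x, ‖w x * f n (φ x) - f n x‖ ≤ ε)) ∧
      -- yet no point satisfies the two cocycle conditions of Lemma 2.6
      ¬ ∃ k : S10,
        (∀ n : ℕ, 1 ≤ ‖∏ i ∈ Finset.range n, w (φ^[i] k)‖) ∧
        (∀ n : ℕ, ∀ t : S10, φ^[n] t = k →
          ‖∏ i ∈ Finset.range n, w (φ^[i] t)‖ ≤ 1) := by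
  refine ⟨S10.isCompact, S10.shift, S10.weight, S10.continuous_shift, S10.surjective_shift,
    S10.not_isOpenMap_shift, S10.continuous_weight, fun x hx => ?_, fun x n hn hx => ?_,
    fun x hx => ?_, fun x hx => ?_, fun x hx => ?_,
    ⟨S10.approxEigenvector, fun n => ⟨S10.continuous_approxEigenvector n,
      S10.norm_approxEigenvector_le n, S10.exists_norm_approxEigenvector_eq_one n⟩,
      fun ε hε => ?_⟩, ?_⟩
  · rw [S10.coe_shift, hx, S10.shiftReal_zero]
  · rw [S10.coe_shift, hx, S10.shiftReal_one_div (by exact_mod_cast hn)]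
  · exact Subtype.ext (S10.shiftReal_of_one_le hx.1)
  · rw [S10.weight, S10.weightReal_of_one_le hx.1]
  · have hx' := (S10.le_half_or_mem_Icc x.2).resolve_right hx
    rw [S10.weight, S10.weightReal_of_le_half hx', Complex.ofReal_ofNat]
  · have hlim := tendsto_one_div_add_atTop_nhds_zero_nat.const_mul (2 : ℝ)
    rw [mul_zero] at hlim
    obtain ⟨N, hN⟩ := eventually_atTop.1 (hlim.eventually_le_const hε)
    exact ⟨N, fun n hn x =>
      (S10.norm_weight_mul_approxEigenvector_shift_sub_le n x).trans (hN n hn)⟩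
  · rintro ⟨k, -, hk⟩
    obtain ⟨t, rfl, ht⟩ := S10.exists_shift_eq_one_lt_weightReal k
    have h₁ := hk 1 t rfl
    rw [Finset.prod_range_one, iterate_zero, id, S10.weight, Complex.norm_real,
      Real.norm_of_nonneg (by linarith)] at h₁
    exact h₁.not_gt ht
end
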